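/- Let E = EuclideanSpace ℝ (Fin n), x₀ ∈ E, and a, a', b, b' ∈ E ∖ {x₀} with a ≠ a' and b ≠ b'. Then the following are equivalent: (1) there exist f, g : ℝ → E, continuous on [0,1], with f 0 = a, g 0 = a', f 1 = b, g 1 = b', f t ≠ g t, f t ≠ x₀ and g t ≠ x₀ for all t ∈ [0,1], and such that the path t ↦ ((f t, g t) : WithLp 2 (E × E)) has eVariationOn over Set.Icc 0 1 equal to ENNReal.ofReal (dist ((a,a') : WithLp 2 (E × E)) ((b,b') : WithLp 2 (E × E))); (2) there is no λ < 0 with b − b' = λ•(a − a'), and x₀ ∉ segment ℝ a b, and x₀ ∉ segment ℝ a' b'. -/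

import Mathlib

/-!
A path whose variation equals the distance `d(A, B)` between its endpoints satisfies
`d(A, F t) + d(F t, B) = d(A, B)` at every time; the ℓ² product of Euclidean spaces is strictly
convex, so every `F t` lies on the segment `[A, B]`, and by the intermediate value theorem the
path sweeps out the whole segment. Hence a geodesic exists iff the straight-line motion stays in
the configuration space. That motion collides exactly when `0` lies on the segment from `a - a'`
to `b - b'`, i.e. when `b - b'` is a negative multiple of `a - a'`.
-/

open Set
open AffineMap (lineMap)

theorem eVariationOn_lineMap {V P : Type*} [SeminormedAddCommGroup V] [NormedSpace ℝ V]
    [PseudoMetricSpace P] [NormedAddTorsor V P] (p q : P) :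
    eVariationOn (lineMap p q : ℝ → P) (Icc 0 1) = ENNReal.ofReal (dist p q) := by
  refine le_antisymm ?_ ?_
  · have hid : eVariationOn (id : ℝ → ℝ) (Icc 0 1) = ENNReal.ofReal 1 := by
      simpa only [id_eq, sub_zero, inter_self] using
        monotoneOn_id.eVariationOn_eq (s := Icc (0 : ℝ) 1)
          (left_mem_Icc.2 zero_le_one) (right_mem_Icc.2 zero_le_one)
    calc eVariationOn (lineMap p q ∘ id : ℝ → P) (Icc 0 1)
        ≤ nndist p q * eVariationOn (id : ℝ → ℝ) (Icc 0 1) :=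
          (lipschitzWith_lineMap p q).lipschitzOnWith.comp_eVariationOn_le (mapsTo_univ _ _)
      _ = ENNReal.ofReal (dist p q) := by
          rw [hid, ENNReal.ofReal_one, mul_one, ← ENNReal.ofReal_coe_nnreal, coe_nndist]
  · simpa [edist_dist] using eVariationOn.edist_le (lineMap p q : ℝ → P)
      (left_mem_Icc.2 zero_le_one) (right_mem_Icc.2 zero_le_one)

theorem dist_add_dist_eq_of_eVariationOn_eq {α : Type*} [PseudoMetricSpace α] {F : ℝ → α}
    {a b t : ℝ} (ht : t ∈ Icc a b)
    (hF : eVariationOn F (Icc a b) = ENNReal.ofReal (dist (F a) (F b))) :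
    dist (F a) (F t) + dist (F t) (F b) = dist (F a) (F b) := by
  refine le_antisymm ?_ (dist_triangle _ _ _)
  have hsum : edist (F a) (F t) + edist (F t) (F b) ≤ ENNReal.ofReal (dist (F a) (F b)) :=
    calc edist (F a) (F t) + edist (F t) (F b)
        ≤ eVariationOn F (Icc a b ∩ Icc a t) + eVariationOn F (Icc a b ∩ Icc t b) :=
          add_le_add (eVariationOn.edist_le F ⟨left_mem_Icc.2 (ht.1.trans ht.2), le_rfl, ht.1⟩
              ⟨ht, ht.1, le_rfl⟩)
            (eVariationOn.edist_le F ⟨ht, le_rfl, ht.2⟩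
              ⟨right_mem_Icc.2 (ht.1.trans ht.2), ht.2, le_rfl⟩)
      _ = ENNReal.ofReal (dist (F a) (F b)) := by
          rw [eVariationOn.Icc_add_Icc F ht.1 ht.2 ht, inter_self, hF]
  rwa [edist_dist, edist_dist, ← ENNReal.ofReal_add dist_nonneg dist_nonneg,
    ENNReal.ofReal_le_ofReal_iff dist_nonneg] at hsum

section Segment

variable {V : Type*} [NormedAddCommGroup V] [NormedSpace ℝ V]

theorem segment_subset_image_of_mapsTo_segment {F : ℝ → V} {a b : ℝ} (hab : a ≤ b)
    (hF : ContinuousOn F (Icc a b)) (hseg : MapsTo F (Icc a b) (segment ℝ (F a) (F b))) :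
    segment ℝ (F a) (F b) ⊆ F '' Icc a b := by
  rcases eq_or_ne (F a) (F b) with hAB | hAB
  · rw [← hAB, segment_same]
    exact singleton_subset_iff.2 ⟨a, left_mem_Icc.2 hab, rfl⟩
  rw [segment_eq_image_lineMap]
  rintro _ ⟨s, hs, rfl⟩
  have hdist : dist (F a) (lineMap (F a) (F b) s) ∈ Icc (dist (F a) (F a)) (dist (F a) (F b)) := by
    rw [dist_left_lineMap, dist_self, Real.norm_of_nonneg hs.1]
    exact ⟨mul_nonneg hs.1 dist_nonneg, mul_le_of_le_one_left dist_nonneg hs.2⟩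
  -- `dist (F a) ·` is injective on the segment, so reaching the right distance reaches the point
  have hcont : ContinuousOn (fun t => dist (F a) (F t)) (Icc a b) := by fun_prop
  obtain ⟨t, ht, hFt⟩ := intermediate_value_Icc hab hcont hdist
  obtain ⟨u, hu, hFu⟩ := (segment_eq_image_lineMap ℝ (F a) (F b) ▸ hseg) ht
  refine ⟨t, ht, ?_⟩
  dsimp only at hFt
  rw [← hFu] at hFt ⊢
  simp only [dist_left_lineMap, Real.norm_of_nonneg hu.1, Real.norm_of_nonneg hs.1] at hFt
  rw [mul_right_cancel₀ (dist_ne_zero.2 hAB) hFt]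

variable [StrictConvexSpace ℝ V]

theorem segment_subset_image_of_eVariationOn_eq {F : ℝ → V} {a b : ℝ} (hab : a ≤ b)
    (hF : ContinuousOn F (Icc a b))
    (hvar : eVariationOn F (Icc a b) = ENNReal.ofReal (dist (F a) (F b))) :
    segment ℝ (F a) (F b) ⊆ F '' Icc a b :=
  segment_subset_image_of_mapsTo_segment hab hF fun _ ht =>
    mem_segment_iff_wbtw.2 (dist_add_dist_eq_iff.1 (dist_add_dist_eq_of_eVariationOn_eq ht hvar))

end Segment

section Collision

variable {𝕜 M : Type*} [Field 𝕜] [LinearOrder 𝕜] [IsStrictOrderedRing 𝕜] [AddCommGroup M]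
  [Module 𝕜 M]

theorem zero_mem_segment_iff_exists_neg_smul {u v : M} (hu : u ≠ 0) (hv : v ≠ 0) :
    (0 : M) ∈ segment 𝕜 u v ↔ ∃ l : 𝕜, l < 0 ∧ v = l • u := by
  rw [mem_segment_iff_sameRay, zero_sub, sub_zero,
    ← exists_pos_left_iff_sameRay (neg_ne_zero.2 hu) hv]
  constructor
  · rintro ⟨r, hr, rfl⟩
    exact ⟨-r, neg_lt_zero.2 hr, by rw [smul_neg, neg_smul]⟩
  · rintro ⟨l, hl, rfl⟩
    exact ⟨-l, neg_pos.2 hl, by rw [smul_neg, neg_smul, neg_neg]⟩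

theorem exists_lineMap_eq_lineMap_iff {a a' b b' : M} (ha : a ≠ a') (hb : b ≠ b') :
    (∃ t ∈ Icc (0 : 𝕜) 1, lineMap a b t = lineMap a' b' t) ↔
      ∃ l : 𝕜, l < 0 ∧ b - b' = l • (a - a') := by
  rw [← zero_mem_segment_iff_exists_neg_smul (sub_ne_zero.2 ha) (sub_ne_zero.2 hb),
    segment_eq_image_lineMap]
  simp only [mem_image, ← vsub_eq_sub, ← AffineMap.lineMap_vsub_lineMap, vsub_eq_zero_iff_eq]

end Collision

theorem WithLp.toLp_lineMap {p : ENNReal} {𝕜 V W : Type*} [Ring 𝕜] [AddCommGroup V]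
    [Module 𝕜 V] [AddCommGroup W] [Module 𝕜 W]
    (a b : V) (a' b' : W) (t : 𝕜) :
    lineMap (WithLp.toLp p (a, a')) (WithLp.toLp p (b, b')) t =
      WithLp.toLp p (lineMap a b t, lineMap a' b' t) := by
  simp only [AffineMap.lineMap_apply_module, ← WithLp.toLp_smul, ← WithLp.toLp_add, Prod.smul_mk,
    Prod.mk_add_mk]

theorem WithLp.exists_eq_lineMap_of_eVariationOn_eq {E : Type*} [NormedAddCommGroup E]
    [InnerProductSpace ℝ E] {f g : ℝ → E} (hf : ContinuousOn f (Icc 0 1))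
    (hg : ContinuousOn g (Icc 0 1))
    (hvar : eVariationOn (fun t => WithLp.toLp 2 (f t, g t)) (Icc 0 1) =
      ENNReal.ofReal (dist (WithLp.toLp 2 (f 0, g 0)) (WithLp.toLp 2 (f 1, g 1))))
    {s : ℝ} (hs : s ∈ Icc (0 : ℝ) 1) :
    ∃ t ∈ Icc (0 : ℝ) 1, f t = lineMap (f 0) (f 1) s ∧ g t = lineMap (g 0) (g 1) s := by
  have hF : ContinuousOn (fun t => WithLp.toLp 2 (f t, g t)) (Icc 0 1) :=
    (WithLp.prodContinuousLinearEquiv 2 ℝ E E).symm.continuous.comp_continuousOn (hf.prodMk hg)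
  have hmem : WithLp.toLp 2 (lineMap (f 0) (f 1) s, lineMap (g 0) (g 1) s) ∈
      segment ℝ (WithLp.toLp 2 (f 0, g 0)) (WithLp.toLp 2 (f 1, g 1)) := by
    rw [← WithLp.toLp_lineMap, segment_eq_image_lineMap]
    exact mem_image_of_mem _ hs
  obtain ⟨t, ht, hFt⟩ := segment_subset_image_of_eVariationOn_eq zero_le_one hF hvar hmem
  exact ⟨t, ht, Prod.ext_iff.1 (WithLp.toLp_injective 2 hFt)⟩

theorem exists_geodesic_punctured_config_iff_general {n : ℕ}
    (x₀ a a' b b' : EuclideanSpace ℝ (Fin n))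
    (ha : a ≠ a') (hb : b ≠ b') :
    (∃ f g : ℝ → EuclideanSpace ℝ (Fin n),
      ContinuousOn f (Set.Icc 0 1) ∧ ContinuousOn g (Set.Icc 0 1) ∧
      f 0 = a ∧ g 0 = a' ∧ f 1 = b ∧ g 1 = b' ∧
      (∀ t ∈ Set.Icc (0 : ℝ) 1, f t ≠ g t) ∧
      (∀ t ∈ Set.Icc (0 : ℝ) 1, f t ≠ x₀) ∧
      (∀ t ∈ Set.Icc (0 : ℝ) 1, g t ≠ x₀) ∧
      eVariationOn
        (fun t : ℝ =>
          (WithLp.equiv 2 (EuclideanSpace ℝ (Fin n) × EuclideanSpace ℝ (Fin n))).symm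
            (f t, g t))
        (Set.Icc 0 1) =
        ENNReal.ofReal
          (dist
            ((WithLp.equiv 2 (EuclideanSpace ℝ (Fin n) × EuclideanSpace ℝ (Fin n))).symm
              (a, a'))
            ((WithLp.equiv 2 (EuclideanSpace ℝ (Fin n) × EuclideanSpace ℝ (Fin n))).symm
              (b, b')))) ↔
    ((¬ ∃ l : ℝ, l < 0 ∧ b - b' = l • (a - a')) ∧
      x₀ ∉ segment ℝ a b ∧ x₀ ∉ segment ℝ a' b') := by
  simp only [← exists_lineMap_eq_lineMap_iff ha hb, segment_eq_image_lineMap, mem_image,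
    WithLp.equiv_symm_apply]
  constructor
  · rintro ⟨f, g, hf, hg, rfl, rfl, rfl, rfl, hne, hfx, hgx, hvar⟩
    have hcover := fun s (hs : s ∈ Icc (0 : ℝ) 1) =>
      WithLp.exists_eq_lineMap_of_eVariationOn_eq hf hg hvar hs
    refine ⟨fun ⟨s, hs, hcoll⟩ => ?_, fun ⟨s, hs, hx⟩ => ?_, fun ⟨s, hs, hx⟩ => ?_⟩ <;>
      obtain ⟨t, ht, hft, hgt⟩ := hcover s hs
    · exact hne t ht (by rw [hft, hgt, hcoll])
    · exact hfx t ht (hft.trans hx)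
    · exact hgx t ht (hgt.trans hx)
  · rintro ⟨hcoll, hx, hx'⟩
    refine ⟨lineMap a b, lineMap a' b', by fun_prop, by fun_prop, by simp, by simp, by simp,
      by simp, fun t ht h => hcoll ⟨t, ht, h⟩, fun t ht h => hx ⟨t, ht, h⟩,
      fun t ht h => hx' ⟨t, ht, h⟩, ?_⟩
    simp only [← WithLp.toLp_lineMap]
    exact eVariationOn_lineMap _ _

/-- In the ordered configuration space `F(ℝⁿ ∖ {x₀}, 2)` with the ℓ² product metric, the
configurations `(a,a')` and `(b,b')` are joined by a geodesic iff the direct linear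
motions do not collide and neither segment `ab`, `a'b'` passes through `x₀`. -/
theorem exists_geodesic_punctured_config_iff {n : ℕ}
    (x₀ a a' b b' : EuclideanSpace ℝ (Fin n))
    (hax : a ≠ x₀) (ha'x : a' ≠ x₀) (hbx : b ≠ x₀) (hb'x : b' ≠ x₀)
    (ha : a ≠ a') (hb : b ≠ b') :
    (∃ f g : ℝ → EuclideanSpace ℝ (Fin n),
      ContinuousOn f (Set.Icc 0 1) ∧ ContinuousOn g (Set.Icc 0 1) ∧
      f 0 = a ∧ g 0 = a' ∧ f 1 = b ∧ g 1 = b' ∧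
      (∀ t ∈ Set.Icc (0 : ℝ) 1, f t ≠ g t) ∧
      (∀ t ∈ Set.Icc (0 : ℝ) 1, f t ≠ x₀) ∧
      (∀ t ∈ Set.Icc (0 : ℝ) 1, g t ≠ x₀) ∧
      eVariationOn
        (fun t : ℝ =>
          (WithLp.equiv 2 (EuclideanSpace ℝ (Fin n) × EuclideanSpace ℝ (Fin n))).symm
            (f t, g t))
        (Set.Icc 0 1) =
        ENNReal.ofReal
          (dist
            ((WithLp.equiv 2 (EuclideanSpace ℝ (Fin n) × EuclideanSpace ℝ (Fin n))).symm
              (a, a'))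
            ((WithLp.equiv 2 (EuclideanSpace ℝ (Fin n) × EuclideanSpace ℝ (Fin n))).symm
              (b, b')))) ↔
    ((¬ ∃ l : ℝ, l < 0 ∧ b - b' = l • (a - a')) ∧
      x₀ ∉ segment ℝ a b ∧ x₀ ∉ segment ℝ a' b') :=
  exists_geodesic_punctured_config_iff_general x₀ a a' b b' ha hb
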